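/- For every integer n ≥ 0, the images in A(n) of the monomials τ^E ξ^R with E = (e₀, …, e_n), R = (r₁, …, r_n), e_s ∈ {0,1} for 0 ≤ s ≤ n and 0 ≤ r_s < 2^{n+1−s} for 1 ≤ s ≤ n, form a basis of A(n) as a finitely generated free k-module. (Paper's Lemma 'left H-basis of A(n)_{∗,∗}', case ℓ = 2.) -/

import Mathlib

open MvPolynomial TensorProduct

noncomputable section

/-- Variables of the dual motivic Steenrod algebra: `.inl i` is `τᵢ`, `.inr i` is `ξ_{i+1}`. -/
abbrev MotVar : Type := ℕ ⊕ ℕ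

variable (k : Type) [CommRing k]

/-- `τᵢ` as a polynomial generator. -/
def tP (i : ℕ) : MvPolynomial MotVar k := X (Sum.inl i)

/-- `ξᵢ` as a polynomial generator, with the convention `ξ₀ = 1`. -/
def xP : ℕ → MvPolynomial MotVar k
  | 0 => 1
  | i + 1 => X (Sum.inr i)

variable (τ ρ : k)

/-- The ideal of defining relations `τᵢ² = τ·ξ_{i+1} + ρ·τ_{i+1} + ρ·τ₀·ξ_{i+1}`. -/
def relIdeal : Ideal (MvPolynomial MotVar k) :=
  Ideal.span (Set.range fun i : ℕ =>
    tP k i ^ 2 - (C τ * xP k (i + 1) + C ρ * tP k (i + 1) + C ρ * tP k 0 * xP k (i + 1)))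

/-- The mod 2 dual motivic Steenrod algebra over `k` (with `H_{*,*}` replaced by `k`). -/
abbrev DSA : Type := MvPolynomial MotVar k ⧸ relIdeal k τ ρ

/-- The canonical projection onto the dual Steenrod algebra. -/
def mkDSA : MvPolynomial MotVar k →+* DSA k τ ρ := Ideal.Quotient.mk _

/-- The monomial `τ^E ξ^R`, where `R i` records the exponent `r_{i+1}` of `ξ_{i+1}`. -/
def monP (E R : ℕ →₀ ℕ) : MvPolynomial MotVar k :=
  (E.prod fun i e => tP k i ^ e) * (R.prod fun i r => xP k (i + 1) ^ r)

/-- The ideal `I(n) ⊆ 𝒜`, generated by the `τ_m` with `m ≥ n+1` and the `ξᵢ^{2^j}`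
with `i ≥ 1`, `j ≥ 0`, `i + j ≥ n+1`. -/
def Iideal (n : ℤ) : Ideal (DSA k τ ρ) :=
  Ideal.span ({x | ∃ m : ℕ, n + 1 ≤ (m : ℤ) ∧ x = mkDSA k τ ρ (tP k m)} ∪
    {x | ∃ i j : ℕ, 1 ≤ i ∧ n + 1 ≤ (i : ℤ) + (j : ℤ) ∧ x = mkDSA k τ ρ (xP k i ^ 2 ^ j)})

/-- The quotient `A(n) = 𝒜/I(n)`. -/
abbrev An (n : ℤ) : Type := DSA k τ ρ ⧸ Iideal k τ ρ n

/-- The index set for the monomial basis of `A(n)`: `E = (e₀, …, e_n)` with every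
`e_s ∈ {0,1}`, and `R = (r₁, …, r_n)` with `0 ≤ r_s < 2^{n+1-s}` (recall `R i = r_{i+1}`,
so the condition reads `R i < 2^(n-i)`, which also forces `R i = 0` for `i ≥ n`). -/
def IdxA (n : ℕ) : Type :=
  {p : (ℕ →₀ ℕ) × (ℕ →₀ ℕ) //
    (∀ s, p.1 s ≤ 1) ∧ (∀ s, n < s → p.1 s = 0) ∧ (∀ i, p.2 i < 2 ^ (n - i))}

/-!
Give `τᵢ` weight `2` and `ξᵢ` weight `1`. Rewriting a square `τⱼ²` by its defining relation
lowers the weight, and a monomial lying in the monomial ideal generated by the `τ_m` with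
`m > n` and the `ξ_{i+1}^{2^(n-i)}` vanishes in `A(n)`. Hence every monomial reduces to a
`k`-combination of the claimed basis monomials, so they span.

For independence, always rewriting the least square defines a `k`-linear normal form map on the
polynomial ring that fixes the basis monomials. Each relation replaces `τᵢ²` by a combination of
monomials, so rewriting `τᵢ²` and then `τⱼ²` produces the same nine terms as the opposite order;
by induction on the weight, the normal form therefore respects every relation and every
truncation, i.e. it factors through `A(n)` and inverts the map from coordinates to `A(n)`.
-/

theorem Module.Basis.exists_of_normalForm {R P A ι : Type*} [Ring R] [AddCommGroup P]
    [Module R P] [AddCommGroup A] [Module R A] (φ : P →ₗ[R] A) (hφ : Function.Surjective φ)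
    (v : ι → P) (N : P →ₗ[R] ι →₀ R) (hN : ∀ x, φ x = 0 → N x = 0)
    (hNv : ∀ p, N (v p) = Finsupp.single p 1)
    (hφN : ∀ x, φ x = Finsupp.linearCombination R (φ ∘ v) (N x)) :
    ∃ b : Module.Basis ι R A, ∀ p, b p = φ (v p) := by
  have hNv' : ∀ c, N (Finsupp.linearCombination R v c) = c := fun c =>
    LinearMap.congr_fun (Finsupp.lhom_ext' (φ := N ∘ₗ Finsupp.linearCombination R v)
      (ψ := LinearMap.id) fun p => LinearMap.ext_ring (by simp [hNv])) c
  have hli : LinearIndependent R (φ ∘ v) := by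
    refine linearIndependent_iff.mpr fun c hc => ?_
    rw [← hNv' c]
    exact hN _ (by rwa [Finsupp.apply_linearCombination])
  have hsp : ⊤ ≤ Submodule.span R (Set.range (φ ∘ v)) := by
    rintro a -
    obtain ⟨x, rfl⟩ := hφ a
    rw [hφN x, ← Finsupp.range_linearCombination]
    exact LinearMap.mem_range_self _ _
  exact ⟨Module.Basis.mk hli hsp, fun p => Module.Basis.mk_apply hli hsp p⟩

theorem MvPolynomial.map_eq_zero_of_mem_span {σ R M : Type*} [CommSemiring R] [AddCommMonoid M]
    [Module R M] (N : MvPolynomial σ R →ₗ[R] M) {s : Set (MvPolynomial σ R)}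
    (hN : ∀ d, ∀ g ∈ s, N (monomial d 1 * g) = 0) {x : MvPolynomial σ R}
    (hx : x ∈ Ideal.span s) : N x = 0 := by
  have hmul : ∀ g ∈ s, ∀ q, N (q * g) = 0 := fun g hg q =>
    LinearMap.congr_fun ((basisMonomials σ R).ext (f₁ := N ∘ₗ LinearMap.mulRight R g) (f₂ := 0)
      fun d => by simpa using hN d g hg) q
  suffices ∀ q, N (q * x) = 0 by simpa using this 1
  induction hx using Submodule.span_induction with
  | mem g hg => exact hmul g hg
  | zero => simp
  | add y z _ _ hy hz => simp [mul_add, hy, hz]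
  | smul a y _ hy => intro q; simpa [mul_assoc] using hy (q * a)

theorem MvPolynomial.monomial_one_eq_mul_of_le {σ R : Type*} [CommSemiring R] {d e : σ →₀ ℕ}
    (h : e ≤ d) : monomial d (1 : R) = monomial (d - e) 1 * monomial e 1 := by
  rw [monomial_mul, tsub_add_cancel_of_le h, one_mul]

namespace DualSteenrod

open Finsupp (single)

variable {k}

abbrev tauExp (i : ℕ) : MotVar →₀ ℕ := single (Sum.inl i) 1

abbrev xiExp (i : ℕ) : MotVar →₀ ℕ := single (Sum.inr i) 1

/-- `relExp i` and `relCoeff` encode the right-hand side `τ·ξ_{i+1} + ρ·τ_{i+1} + ρ·τ₀·ξ_{i+1}`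
of the relation for `τᵢ²` as a sum of three terms. -/
def relCoeff : Fin 3 → k := ![τ, ρ, ρ]

def relExp (i : ℕ) : Fin 3 → MotVar →₀ ℕ := ![xiExp i, tauExp (i + 1), tauExp 0 + xiExp i]

def relation (i : ℕ) : MvPolynomial MotVar k :=
  tP k i ^ 2 - (C τ * xP k (i + 1) + C ρ * tP k (i + 1) + C ρ * tP k 0 * xP k (i + 1))

theorem relation_mem_relIdeal (i : ℕ) : relation τ ρ i ∈ relIdeal k τ ρ :=
  Ideal.subset_span (Set.mem_range_self i)

theorem relation_eq_monomial (i : ℕ) :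
    relation τ ρ i =
      monomial (single (Sum.inl i) 2) 1 - ∑ a, monomial (relExp i a) (relCoeff τ ρ a) := by
  simp [relation, tP, xP, X, monomial_pow, C_mul_monomial, monomial_mul, Fin.sum_univ_three, relExp,
    relCoeff]

/-- Rewriting `τᵢ²` (weight `4`) by the defining relation lowers this weight to at most `3`. -/
def weight : (MotVar →₀ ℕ) →+ ℕ := Finsupp.weight (Sum.elim 2 1)

theorem weight_relExp_lt (i j : ℕ) (a : Fin 3) :
    weight (relExp i a) < weight (single (Sum.inl j) 2) := by
  fin_cases a <;> simp [weight, relExp, Finsupp.weight_single]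

variable (n : ℕ)

/-- The monomial `τ^E ξ^R` with exponent vector `d` lies in the monomial ideal generated by
the `τ_m` with `m > n` and the `ξ_{i+1}^{2^(n-i)}`. -/
def IsTruncated (d : MotVar →₀ ℕ) : Prop :=
  (∃ m, n < m ∧ d (Sum.inl m) ≠ 0) ∨ ∃ i, 2 ^ (n - i) ≤ d (Sum.inr i)

variable {n}

theorem IsTruncated.mono {d d' : MotVar →₀ ℕ} (h : d ≤ d') (hd : IsTruncated n d) :
    IsTruncated n d' := by
  rcases hd with ⟨m, hm, hdm⟩ | ⟨i, hi⟩
  · exact Or.inl ⟨m, hm, fun h0 => hdm (Nat.eq_zero_of_le_zero (h0 ▸ h _))⟩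
  · exact Or.inr ⟨i, hi.trans (h _)⟩

theorem IsTruncated.add_right {d : MotVar →₀ ℕ} (hd : IsTruncated n d) (e : MotVar →₀ ℕ) :
    IsTruncated n (d + e) :=
  hd.mono le_self_add

theorem IsTruncated.add_left {d : MotVar →₀ ℕ} (hd : IsTruncated n d) (e : MotVar →₀ ℕ) :
    IsTruncated n (e + d) :=
  hd.mono le_add_self

theorem isTruncated_relExp {i : ℕ} (hi : n < i) (a : Fin 3) : IsTruncated n (relExp i a) := by
  have hξ : 2 ^ (n - i) ≤ 1 := by simp [Nat.sub_eq_zero_of_le hi.le]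
  fin_cases a
  · exact Or.inr ⟨i, by simpa [relExp] using hξ⟩
  · exact Or.inl ⟨i + 1, by omega, by simp [relExp]⟩
  · exact Or.inr ⟨i, by simpa [relExp] using hξ⟩

theorem IsTruncated.of_add_sq {d : MotVar →₀ ℕ} {i : ℕ}
    (h : IsTruncated n (d + single (Sum.inl i) 2)) : IsTruncated n d ∨ n < i := by
  rcases h with ⟨m, hm, hdm⟩ | ⟨j, hj⟩
  · by_cases hmi : m = i
    · exact Or.inr (hmi ▸ hm)
    · exact Or.inl (Or.inl ⟨m, hm, by simpa [Finsupp.single_apply, Ne.symm hmi] using hdm⟩)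
  · exact Or.inl (Or.inr ⟨j, by simpa using hj⟩)

theorem monP_eq_monomial (E R : ℕ →₀ ℕ) : monP k E R = monomial (E.sumElim R) 1 := by
  rw [monomial_eq, C_1, one_mul, Finsupp.prod_sumElim]
  rfl

def idxExp (p : IdxA n) : MotVar →₀ ℕ := p.1.1.sumElim p.1.2

theorem not_isTruncated_idxExp (p : IdxA n) : ¬ IsTruncated n (idxExp p) := by
  rintro (⟨m, hm, hpm⟩ | ⟨i, hi⟩)
  · exact hpm (p.2.2.1 m hm)
  · exact (p.2.2.2 i).not_ge hi

theorem idxExp_inl_lt_two (p : IdxA n) (i : ℕ) : idxExp p (Sum.inl i) < 2 :=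
  Nat.lt_succ_of_le (p.2.1 i)

def toIdx (d : MotVar →₀ ℕ) (hd : ¬ IsTruncated n d) (hsq : ¬ ∃ i, 2 ≤ d (Sum.inl i)) :
    IdxA n :=
  ⟨Finsupp.sumFinsuppEquivProdFinsupp d,
    fun s => Nat.le_of_lt_succ (not_le.mp fun h => hsq ⟨s, h⟩),
    fun s hs => by_contra fun h => hd (Or.inl ⟨s, hs, h⟩),
    fun i => not_le.mp fun h => hd (Or.inr ⟨i, h⟩)⟩

theorem idxExp_toIdx (d : MotVar →₀ ℕ) (hd : ¬ IsTruncated n d)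
    (hsq : ¬ ∃ i, 2 ≤ d (Sum.inl i)) : idxExp (toIdx d hd hsq) = d :=
  Finsupp.sumFinsuppEquivProdFinsupp.symm_apply_apply d

theorem toIdx_idxExp (p : IdxA n) (hd : ¬ IsTruncated n (idxExp p))
    (hsq : ¬ ∃ i, 2 ≤ idxExp p (Sum.inl i)) : toIdx (idxExp p) hd hsq = p :=
  Subtype.ext (Finsupp.sumFinsuppEquivProdFinsupp.apply_symm_apply p.1)

theorem weight_sub_sq_add_relExp_lt {d : MotVar →₀ ℕ} {i : ℕ} (hi : 2 ≤ d (Sum.inl i))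
    (j : ℕ) (a : Fin 3) : weight (d - single (Sum.inl i) 2 + relExp j a) < weight d := by
  have hd : d - single (Sum.inl i) 2 + single (Sum.inl i) 2 = d :=
    tsub_add_cancel_of_le (Finsupp.single_le_iff.mpr hi)
  have := weight_relExp_lt j i a
  conv_rhs => rw [← hd]
  rw [map_add, map_add]
  omega

variable (n)

open Classical in
/-- The coordinates of the image in `A(n)` of the monomial with exponent vector `d`. -/
def normalForm (d : MotVar →₀ ℕ) : IdxA n →₀ k :=
  if hd : IsTruncated n d then 0
  else if hsq : ∃ i, 2 ≤ d (Sum.inl i) then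
    ∑ a, relCoeff τ ρ a •
      normalForm (d - single (Sum.inl (Nat.find hsq)) 2 + relExp (Nat.find hsq) a)
  else Finsupp.single (toIdx d hd hsq) 1
termination_by weight d
decreasing_by exact weight_sub_sq_add_relExp_lt (Nat.find_spec hsq) _ a

variable {τ ρ n}

theorem normalForm_of_isTruncated {d : MotVar →₀ ℕ} (hd : IsTruncated n d) :
    normalForm τ ρ n d = 0 := by
  rw [normalForm, dif_pos hd]

theorem normalForm_idxExp (p : IdxA n) : normalForm τ ρ n (idxExp p) = Finsupp.single p 1 := by
  have hsq : ¬ ∃ i, 2 ≤ idxExp p (Sum.inl i) := fun ⟨i, hi⟩ =>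
    (idxExp_inl_lt_two p i).not_ge hi
  rw [normalForm, dif_neg (not_isTruncated_idxExp p), dif_neg hsq, toIdx_idxExp]

theorem exists_normalForm_eq_sum {d : MotVar →₀ ℕ} (hd : ¬ IsTruncated n d)
    (hsq : ∃ i, 2 ≤ d (Sum.inl i)) :
    ∃ j d', d = d' + single (Sum.inl j) 2 ∧
      normalForm τ ρ n d = ∑ a, relCoeff τ ρ a • normalForm τ ρ n (d' + relExp j a) := by
  refine ⟨Nat.find hsq, d - single (Sum.inl (Nat.find hsq)) 2,
    (tsub_add_cancel_of_le (Finsupp.single_le_iff.mpr (Nat.find_spec hsq))).symm, ?_⟩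
  rw [normalForm, dif_neg hd, dif_pos hsq]

theorem normalForm_add_sq (d : MotVar →₀ ℕ) (i : ℕ) :
    normalForm τ ρ n (d + single (Sum.inl i) 2) =
      ∑ a, relCoeff τ ρ a • normalForm τ ρ n (d + relExp i a) := by
  induction d using (measure weight).wf.induction generalizing i with
  | _ d ih =>
  by_cases hD : IsTruncated n (d + single (Sum.inl i) 2)
  · have hterms : ∀ a, IsTruncated n (d + relExp i a) := fun a =>
      hD.of_add_sq.elim (·.add_right _) fun hi => (isTruncated_relExp hi a).add_left d
    simp [normalForm_of_isTruncated hD, normalForm_of_isTruncated (hterms _)]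
  obtain ⟨j, d', hdd', hNF⟩ := exists_normalForm_eq_sum (τ := τ) (ρ := ρ) hD ⟨i, by simp⟩
  rw [hNF]
  by_cases hji : j = i
  · rw [hji] at hdd'
    rw [hji, add_right_cancel hdd'.symm]
  -- `τⱼ²` already divides `d`, and rewriting `τᵢ²` and `τⱼ²` commutes.
  have hj : 2 ≤ d (Sum.inl j) := by
    have := DFunLike.congr_fun hdd' (Sum.inl j)
    simp only [Finsupp.add_apply, Finsupp.single_eq_same, Finsupp.single_apply, Sum.inl.injEq,
      if_neg (Ne.symm hji)] at this
    omega
  obtain ⟨e, rfl⟩ : ∃ e, d = e + single (Sum.inl j) 2 :=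
    ⟨_, (tsub_add_cancel_of_le (Finsupp.single_le_iff.mpr hj)).symm⟩
  obtain rfl : d' = e + single (Sum.inl i) 2 :=
    add_right_cancel (hdd'.symm.trans (add_right_comm _ _ _))
  have ih' : ∀ l a b, normalForm τ ρ n (e + relExp l a + single (Sum.inl b) 2) =
      ∑ c, relCoeff τ ρ c • normalForm τ ρ n (e + relExp l a + relExp b c) := fun l a b =>
    ih _ (show weight _ < weight _ by simpa using weight_relExp_lt l j a) b
  calc ∑ a, relCoeff τ ρ a • normalForm τ ρ n (e + single (Sum.inl i) 2 + relExp j a)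
      = ∑ a, relCoeff τ ρ a • ∑ b, relCoeff τ ρ b •
          normalForm τ ρ n (e + relExp j a + relExp i b) := by
        simp_rw [add_right_comm e (single _ _), ih']
    _ = ∑ b, relCoeff τ ρ b • ∑ a, relCoeff τ ρ a •
          normalForm τ ρ n (e + relExp i b + relExp j a) := by
        simp_rw [Finset.smul_sum, smul_smul]
        rw [Finset.sum_comm]
        refine Finset.sum_congr rfl fun b _ => Finset.sum_congr rfl fun a _ => ?_
        rw [mul_comm, add_right_comm e]
    _ = ∑ b, relCoeff τ ρ b • normalForm τ ρ n (e + single (Sum.inl j) 2 + relExp i b) := by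
        simp_rw [add_right_comm e (single _ _), ih']

theorem monomial_mul_relation (d : MotVar →₀ ℕ) (i : ℕ) :
    monomial d 1 * relation τ ρ i =
      monomial (d + single (Sum.inl i) 2) 1 -
        ∑ a, relCoeff τ ρ a • monomial (d + relExp i a) 1 := by
  simp [relation_eq_monomial, mul_sub, Finset.mul_sum, monomial_mul, smul_monomial]

def truncGens (n : ℤ) : Set (MvPolynomial MotVar k) :=
  {x | ∃ m : ℕ, n + 1 ≤ (m : ℤ) ∧ x = tP k m} ∪
    {x | ∃ i j : ℕ, 1 ≤ i ∧ n + 1 ≤ (i : ℤ) + (j : ℤ) ∧ x = xP k i ^ 2 ^ j}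

theorem Iideal_eq_map (n : ℤ) :
    Iideal k τ ρ n = Ideal.map (mkDSA k τ ρ) (Ideal.span (truncGens n)) := by
  rw [Iideal, Ideal.map_span, truncGens, Set.image_union]
  congr 2 <;> ext x <;> simp [eq_comm, and_assoc]

theorem exists_isTruncated_of_mem_truncGens {g : MvPolynomial MotVar k} (hg : g ∈ truncGens n) :
    ∃ e, IsTruncated n e ∧ g = monomial e 1 := by
  rcases hg with ⟨m, hm, rfl⟩ | ⟨i, j, hi, hij, rfl⟩
  · exact ⟨tauExp m, Or.inl ⟨m, by omega, by simp⟩, rfl⟩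
  · obtain ⟨i, rfl⟩ : ∃ i', i = i' + 1 := ⟨i - 1, by omega⟩
    refine ⟨single (Sum.inr i) (2 ^ j), Or.inr ⟨i, ?_⟩, X_pow_eq_monomial⟩
    simpa using Nat.pow_le_pow_right two_pos (by omega : n - i ≤ j)

variable (τ ρ n)

def normalFormLinear : MvPolynomial MotVar k →ₗ[k] IdxA n →₀ k :=
  (basisMonomials MotVar k).constr k (normalForm τ ρ n)

def toAn : MvPolynomial MotVar k →ₐ[k] An k τ ρ n :=
  (Ideal.Quotient.mkₐ k (Iideal k τ ρ n)).comp (Ideal.Quotient.mkₐ k (relIdeal k τ ρ))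

variable {τ ρ n}

theorem normalFormLinear_monomial_one (d : MotVar →₀ ℕ) :
    normalFormLinear τ ρ n (monomial d 1) = normalForm τ ρ n d :=
  (basisMonomials MotVar k).constr_basis k _ d

theorem normalFormLinear_monP (p : IdxA n) :
    normalFormLinear τ ρ n (monP k p.1.1 p.1.2) = Finsupp.single p 1 := by
  rw [monP_eq_monomial, ← idxExp, normalFormLinear_monomial_one, normalForm_idxExp]

theorem normalFormLinear_eq_zero_of_mem {x : MvPolynomial MotVar k}
    (hx : x ∈ relIdeal k τ ρ ⊔ Ideal.span (truncGens n)) : normalFormLinear τ ρ n x = 0 := by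
  obtain ⟨y, hy, z, hz, rfl⟩ := Submodule.mem_sup.mp hx
  have hrel : normalFormLinear τ ρ n y = 0 := by
    refine MvPolynomial.map_eq_zero_of_mem_span (s := Set.range (relation τ ρ)) _ ?_ hy
    rintro d _ ⟨i, rfl⟩
    simp [monomial_mul_relation, normalFormLinear_monomial_one, normalForm_add_sq]
  have htrunc : normalFormLinear τ ρ n z = 0 := by
    refine MvPolynomial.map_eq_zero_of_mem_span _ (fun d g hg => ?_) hz
    obtain ⟨e, he, rfl⟩ := exists_isTruncated_of_mem_truncGens hg
    rw [monomial_mul, one_mul, normalFormLinear_monomial_one,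
      normalForm_of_isTruncated (he.add_left d)]
  rw [map_add, hrel, htrunc, add_zero]

theorem mem_sup_of_toAn_eq_zero {x : MvPolynomial MotVar k} (hx : toAn τ ρ n x = 0) :
    x ∈ relIdeal k τ ρ ⊔ Ideal.span (truncGens n) := by
  have hx' : mkDSA k τ ρ x ∈ Iideal k τ ρ n := Ideal.Quotient.eq_zero_iff_mem.mp hx
  rw [Iideal_eq_map, ← Ideal.mem_comap,
    Ideal.comap_map_of_surjective' (mkDSA k τ ρ) Ideal.Quotient.mk_surjective, mkDSA,
    Ideal.mk_ker] at hx'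
  rwa [sup_comm]

theorem toAn_eq_zero_of_mem_relIdeal {x : MvPolynomial MotVar k} (hx : x ∈ relIdeal k τ ρ) :
    toAn τ ρ n x = 0 := by
  rw [toAn, AlgHom.comp_apply, Ideal.Quotient.mkₐ_eq_mk, Ideal.Quotient.mkₐ_eq_mk,
    Ideal.Quotient.eq_zero_iff_mem.mpr hx, map_zero]

theorem toAn_eq_zero_of_mem_truncGens {g : MvPolynomial MotVar k} (hg : g ∈ truncGens n) :
    toAn τ ρ n g = 0 :=
  Ideal.Quotient.eq_zero_iff_mem.mpr <| by
    rw [Iideal_eq_map]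
    exact Ideal.mem_map_of_mem _ (Ideal.subset_span hg)

theorem toAn_monomial_of_isTruncated {d : MotVar →₀ ℕ} (hd : IsTruncated n d) :
    toAn τ ρ n (monomial d 1) = 0 := by
  obtain ⟨g, hg, e, he⟩ : ∃ g ∈ truncGens (k := k) n, ∃ e ≤ d, g = monomial e 1 := by
    rcases hd with ⟨m, hm, hdm⟩ | ⟨i, hi⟩
    · exact ⟨tP k m, Or.inl ⟨m, by omega, rfl⟩, tauExp m,
        Finsupp.single_le_iff.mpr (Nat.one_le_iff_ne_zero.mpr hdm), rfl⟩
    · exact ⟨xP k (i + 1) ^ 2 ^ (n - i), Or.inr ⟨i + 1, n - i, by omega, by omega, rfl⟩,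
        single (Sum.inr i) (2 ^ (n - i)), Finsupp.single_le_iff.mpr hi, X_pow_eq_monomial⟩
  rw [MvPolynomial.monomial_one_eq_mul_of_le he.1, ← he.2, map_mul,
    toAn_eq_zero_of_mem_truncGens hg]
  exact mul_zero (M₀ := An k τ ρ n) _

theorem toAn_monomial_add_sq (d : MotVar →₀ ℕ) (i : ℕ) :
    toAn τ ρ n (monomial (d + single (Sum.inl i) 2) 1) =
      ∑ a, relCoeff τ ρ a • toAn τ ρ n (monomial (d + relExp i a) 1) := by
  have hrel : toAn τ ρ n (monomial d 1 * relation τ ρ i) = 0 := by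
    rw [map_mul, toAn_eq_zero_of_mem_relIdeal (relation_mem_relIdeal τ ρ i)]
    exact mul_zero (M₀ := An k τ ρ n) _
  rw [monomial_mul_relation, map_sub, sub_eq_zero, map_sum] at hrel
  simpa using hrel

theorem toAn_monomial_eq_linearCombination (d : MotVar →₀ ℕ) :
    toAn τ ρ n (monomial d 1) = Finsupp.linearCombination k
      (fun p : IdxA n => toAn τ ρ n (monP k p.1.1 p.1.2)) (normalForm τ ρ n d) := by
  induction d using (measure weight).wf.induction with
  | _ d ih =>
  by_cases hd : IsTruncated n d
  · rw [toAn_monomial_of_isTruncated hd, normalForm_of_isTruncated hd, map_zero]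
  by_cases hsq : ∃ i, 2 ≤ d (Sum.inl i)
  · obtain ⟨j, d', rfl, hNF⟩ := exists_normalForm_eq_sum (τ := τ) (ρ := ρ) hd hsq
    rw [toAn_monomial_add_sq, hNF, map_sum]
    refine Finset.sum_congr rfl fun a _ => ?_
    rw [map_smul, ih _ (show weight _ < weight _ by simpa using weight_relExp_lt j j a)]
  · rw [← idxExp_toIdx d hd hsq, normalForm_idxExp, Finsupp.linearCombination_single, one_smul,
      monP_eq_monomial, idxExp]

theorem toAn_eq_linearCombination (x : MvPolynomial MotVar k) :
    toAn τ ρ n x = Finsupp.linearCombination k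
      (fun p : IdxA n => toAn τ ρ n (monP k p.1.1 p.1.2)) (normalFormLinear τ ρ n x) := by
  refine LinearMap.congr_fun ((basisMonomials MotVar k).ext (f₁ := (toAn τ ρ n).toLinearMap)
    (f₂ := Finsupp.linearCombination k _ ∘ₗ normalFormLinear τ ρ n) fun d => ?_) x
  simpa [normalFormLinear_monomial_one] using toAn_monomial_eq_linearCombination d

theorem finite_idxA (n : ℕ) : Finite (IdxA n) := by
  let S := (Finset.range (n + 1)).finsupp (fun _ => Finset.range 2) ×ˢ
    (Finset.range (n + 1)).finsupp (fun _ => Finset.range (2 ^ n))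
  refine Finite.of_injective (β := S) (fun p => ⟨p.1, ?_⟩)
    fun p q h => Subtype.ext (congrArg (fun s : S => s.1) h)
  obtain ⟨p, he, hE, hR⟩ := p
  have hR' : ∀ i, p.2 i < 2 ^ n := fun i =>
    (hR i).trans_le (Nat.pow_le_pow_right two_pos (Nat.sub_le n i))
  simp only [S, Finset.mem_product, Finset.mem_finsupp_iff, Finset.mem_range]
  refine ⟨⟨fun s hs => ?_, fun s _ => Nat.lt_succ_of_le (he s)⟩, ⟨fun i hi => ?_, fun i _ => hR' i⟩⟩
  · by_contra h
    exact Finsupp.mem_support_iff.mp hs (hE s (by simpa using h))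
  · by_contra h
    have := hR i
    rw [Nat.sub_eq_zero_of_le (by simp at h; omega), pow_zero] at this
    exact Finsupp.mem_support_iff.mp hi (by omega)

end DualSteenrod

theorem statement3_general (k : Type) [CommRing k] (τ ρ : k) (n : ℕ) :
    Finite (IdxA n) ∧
    ∃ b : Module.Basis (IdxA n) k (An k τ ρ n),
      ∀ p : IdxA n,
        b p = Ideal.Quotient.mk (Iideal k τ ρ n) (mkDSA k τ ρ (monP k p.1.1 p.1.2)) :=
  ⟨DualSteenrod.finite_idxA n,
    Module.Basis.exists_of_normalForm (DualSteenrod.toAn τ ρ n).toLinearMap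
      (Ideal.Quotient.mk_surjective.comp Ideal.Quotient.mk_surjective) _
      (DualSteenrod.normalFormLinear τ ρ n)
      (fun _ hx => DualSteenrod.normalFormLinear_eq_zero_of_mem
        (DualSteenrod.mem_sup_of_toAn_eq_zero hx))
      DualSteenrod.normalFormLinear_monP DualSteenrod.toAn_eq_linearCombination⟩

/-- For every `n ≥ 0`, the images in `A(n)` of the monomials `τ^E ξ^R`
with `e_s ∈ {0,1}` for `0 ≤ s ≤ n` and `0 ≤ r_s < 2^{n+1-s}` for `1 ≤ s ≤ n` form a basis
of `A(n)` as a finitely generated free `k`-module. -/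
theorem statement3 (k : Type) [CommRing k] (h2 : (2 : k) = 0) (τ ρ : k) (n : ℕ) :
    Finite (IdxA n) ∧
    ∃ b : Module.Basis (IdxA n) k (An k τ ρ n),
      ∀ p : IdxA n,
        b p = Ideal.Quotient.mk (Iideal k τ ρ n) (mkDSA k τ ρ (monP k p.1.1 p.1.2)) :=
  statement3_general k τ ρ n
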